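/- In the A_{2n}^{(2)} perfect crystal B of level l, with indices i_a = a-1 for 1 ≤ a ≤ n+1 and i_a = 2n+1-a for n+2 ≤ a ≤ 2n, the recursively defined sets B_0 = {(0,...,0)}, B_a = ⋃_{m≥0} f_{i_a}^m B_{a-1} \ {0} satisfy: B_a = {(x_1,...,x_a,0,...,0)} for 1 ≤ a ≤ n, B_{n+a} = {(x_1,...,x_n,\bar{x}_n,...,\bar{x}_{n-a+1},0,...,0)} for 1 ≤ a ≤ n-1, and B_{2n} = B. -/

import Mathlib

/- The perfect crystal B of level l for A_{2n}^{(2)}: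
   elements (x_1,…,x_n,x̄_n,…,x̄_1) with x_i, x̄_i ≥ 0 and Σ (x_i + x̄_i) ≤ l.
   We encode an element as a pair of ℕ-indexed integer functions
   supported on 1..n. -/
structure AElt where
  x : ℕ → ℤ
  xb : ℕ → ℤ

namespace AElt

def sumA (n : ℕ) (b : AElt) : ℤ := ∑ i ∈ Finset.Icc 1 n, (b.x i + b.xb i)

/-- membership in the level `l` perfect crystal `B` for `A_{2n}^{(2)}` -/
def mem (n l : ℕ) (b : AElt) : Prop :=
  (∀ i, 0 ≤ b.x i) ∧ (∀ i, 0 ≤ b.xb i) ∧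
  (∀ i, i = 0 ∨ n < i → b.x i = 0 ∧ b.xb i = 0) ∧
  sumA n b ≤ l

/-- the Kashiwara operator `f_0` -/
def f0 (b : AElt) : AElt :=
  if b.xb 1 ≤ b.x 1 then ⟨Function.update b.x 1 (b.x 1 + 1), b.xb⟩
  else ⟨b.x, Function.update b.xb 1 (b.xb 1 - 1)⟩

/-- the Kashiwara operator `f_i`, `1 ≤ i ≤ n-1` -/
def fmid (i : ℕ) (b : AElt) : AElt :=
  if b.xb (i+1) ≤ b.x (i+1) then
    ⟨Function.update (Function.update b.x i (b.x i - 1)) (i+1) (b.x (i+1) + 1), b.xb⟩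
  else
    ⟨b.x, Function.update (Function.update b.xb (i+1) (b.xb (i+1) - 1)) i (b.xb i + 1)⟩

/-- the Kashiwara operator `f_n` -/
def flast (n : ℕ) (b : AElt) : AElt :=
  ⟨Function.update b.x n (b.x n - 1), Function.update b.xb n (b.xb n + 1)⟩

/-- the Kashiwara operator `f_i`, `0 ≤ i ≤ n` -/
def f (n i : ℕ) (b : AElt) : AElt :=
  if i = 0 then f0 b else if i = n then flast n b else fmid i b

/-- `φ_i(b)`; `f_i b` is defined exactly when `φ_i(b) > 0` -/
def phi (n l i : ℕ) (b : AElt) : ℤ :=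
  if i = 0 then (l : ℤ) - sumA n b + 2 * max (b.xb 1 - b.x 1) 0
  else if i = n then b.x n
  else b.x i + max (b.xb (i+1) - b.x (i+1)) 0

/-- `ε_i(b)` for the `A_{2n}^{(2)}` perfect crystal -/
def eps (n l i : ℕ) (b : AElt) : ℤ :=
  if i = 0 then (l : ℤ) - sumA n b + 2 * max (b.x 1 - b.xb 1) 0
  else if i = n then b.xb n
  else b.xb i + max (b.x (i+1) - b.xb (i+1)) 0

end AElt

namespace AElt

/-- the index sequence `i_a = a-1` for `1 ≤ a ≤ n+1`, `i_a = 2n+1-a` for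
`n+2 ≤ a ≤ 2n` -/
def idx (n a : ℕ) : ℕ := if a ≤ n + 1 then a - 1 else 2 * n + 1 - a

/-- the ground-state element `(0,…,0)` -/
def bzero : AElt := ⟨fun _ => 0, fun _ => 0⟩

/-- the recursively defined sets `B_0 = {(0,…,0)}`,
`B_a = ⋃_{m ≥ 0} f_{i_a}^m B_{a-1} \ {0}`. -/
def BSet (n l : ℕ) : ℕ → Set AElt
  | 0 => {bzero}
  | a + 1 => {c | ∃ b ∈ BSet n l a, ∃ m : ℕ,
      (∀ k < m, 0 < phi n l (idx n (a+1)) ((f n (idx n (a+1)))^[k] b)) ∧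
      c = (f n (idx n (a+1)))^[m] b}

end AElt

/-! Each set `B_a` is the closure of `B_{a-1}` under strings of a single operator `f_i`.
The claimed set `T` contains `B_{a-1}` and is closed under `f_i` wherever `φ_i > 0`, so
`B_a ⊆ T`. Conversely, an element `c ∈ T` outside `B_{a-1}` has `ε_i c > 0`, so its
preimage `e_i c` again lies in `T`, has `φ_i (e_i c) = φ_i c + 1 > 0`, and is smaller
than `c` for a suitable measure; induction on the measure shows that `T ⊆ B_a`. -/

attribute [ext] AElt

open Function Finset

section StringClosure

variable {α : Type*}

def stringClosure (g : α → α) (P : α → Prop) (S : Set α) : Set α :=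
  {c | ∃ b ∈ S, ∃ m : ℕ, (∀ k < m, P (g^[k] b)) ∧ c = g^[m] b}

variable {g : α → α} {P : α → Prop} {S T : Set α}

lemma subset_stringClosure_self : S ⊆ stringClosure g P S :=
  fun b hb => ⟨b, hb, 0, fun _ h => absurd h (Nat.not_lt_zero _), rfl⟩

lemma apply_mem_stringClosure {c : α} (hc : c ∈ stringClosure g P S) (hP : P c) :
    g c ∈ stringClosure g P S := by
  obtain ⟨b, hb, m, hm, rfl⟩ := hc
  refine ⟨b, hb, m + 1, fun k hk => ?_, (iterate_succ_apply' g m b).symm⟩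
  rcases Nat.lt_succ_iff_lt_or_eq.1 hk with hk | rfl
  exacts [hm k hk, hP]

lemma stringClosure_subset (hST : S ⊆ T) (hT : ∀ c ∈ T, P c → g c ∈ T) :
    stringClosure g P S ⊆ T := by
  rintro _ ⟨b, hb, m, hm, rfl⟩
  induction m with
  | zero => exact hST hb
  | succ m ih =>
    rw [iterate_succ_apply']
    exact hT _ (ih fun k hk => hm k (by omega)) (hm m (by omega))

lemma subset_stringClosure (μ : α → ℕ)
    (h : ∀ c ∈ T, c ∈ S ∨ ∃ c' ∈ T, P c' ∧ g c' = c ∧ μ c' < μ c) :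
    T ⊆ stringClosure g P S := by
  intro c hc
  induction hμ : μ c using Nat.strong_induction_on generalizing c with
  | _ k ih =>
    rcases h c hc with hS | ⟨c', hc', hP, rfl, hlt⟩
    · exact subset_stringClosure_self hS
    · exact apply_mem_stringClosure (ih _ (hμ ▸ hlt) hc' rfl) hP

end StringClosure

namespace AElt

variable {n l i : ℕ}

lemma mk_x_xb (b : AElt) : (⟨b.x, b.xb⟩ : AElt) = b := rfl

lemma sumA_mk_update_x {x xb : ℕ → ℤ} {j : ℕ} (hj : j ∈ Icc 1 n) (v : ℤ) :
    sumA n ⟨update x j v, xb⟩ = sumA n ⟨x, xb⟩ + (v - x j) := by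
  simp only [sumA, sum_add_distrib, sum_update_of_mem hj, ← add_sum_erase _ x hj,
    sdiff_singleton_eq_erase]
  ring

lemma sumA_mk_update_xb {x xb : ℕ → ℤ} {j : ℕ} (hj : j ∈ Icc 1 n) (v : ℤ) :
    sumA n ⟨x, update xb j v⟩ = sumA n ⟨x, xb⟩ + (v - xb j) := by
  simp only [sumA, sum_add_distrib, sum_update_of_mem hj, ← add_sum_erase _ xb hj,
    sdiff_singleton_eq_erase]
  ring

lemma mem_mk_update_x {b : AElt} (hb : mem n l b) {j : ℕ} (hj : j ∈ Icc 1 n) {v : ℤ}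
    (hv : 0 ≤ v) (hsum : sumA n b + (v - b.x j) ≤ l) : mem n l ⟨update b.x j v, b.xb⟩ := by
  obtain ⟨hx, hxb, hsupp, -⟩ := hb
  refine ⟨fun k => ?_, hxb, fun k hk => ?_, by rwa [sumA_mk_update_x hj, mk_x_xb]⟩
  · dsimp only; rw [update_apply]; split_ifs; exacts [hv, hx k]
  · have : k ≠ j := by rintro rfl; have := mem_Icc.1 hj; omega
    simpa only [update_of_ne this] using hsupp k hk

lemma mem_mk_update_xb {b : AElt} (hb : mem n l b) {j : ℕ} (hj : j ∈ Icc 1 n) {v : ℤ}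
    (hv : 0 ≤ v) (hsum : sumA n b + (v - b.xb j) ≤ l) : mem n l ⟨b.x, update b.xb j v⟩ := by
  obtain ⟨hx, hxb, hsupp, -⟩ := hb
  refine ⟨hx, fun k => ?_, fun k hk => ?_, by rwa [sumA_mk_update_xb hj, mk_x_xb]⟩
  · dsimp only; rw [update_apply]; split_ifs; exacts [hv, hxb k]
  · have : k ≠ j := by rintro rfl; have := mem_Icc.1 hj; omega
    simpa only [update_of_ne this] using hsupp k hk

def e0 (b : AElt) : AElt :=
  if b.xb 1 < b.x 1 then ⟨update b.x 1 (b.x 1 - 1), b.xb⟩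
  else ⟨b.x, update b.xb 1 (b.xb 1 + 1)⟩

def emid (i : ℕ) (b : AElt) : AElt :=
  if b.xb (i+1) < b.x (i+1) then
    ⟨update (update b.x (i+1) (b.x (i+1) - 1)) i (b.x i + 1), b.xb⟩
  else
    ⟨b.x, update (update b.xb i (b.xb i - 1)) (i+1) (b.xb (i+1) + 1)⟩

def elast (n : ℕ) (b : AElt) : AElt :=
  ⟨update b.x n (b.x n + 1), update b.xb n (b.xb n - 1)⟩

def e (n i : ℕ) (b : AElt) : AElt :=
  if i = 0 then e0 b else if i = n then elast n b else emid i b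

lemma f_zero : f n 0 = f0 := rfl

lemma f_self (hn : n ≠ 0) : f n n = flast n := by
  ext1 b; simp [f, hn]

lemma f_of_ne (h0 : i ≠ 0) (hn : i ≠ n) : f n i = fmid i := by
  ext1 b; simp [f, h0, hn]

lemma e_zero : e n 0 = e0 := rfl

lemma e_self (hn : n ≠ 0) : e n n = elast n := by
  ext1 b; simp [e, hn]

lemma e_of_ne (h0 : i ≠ 0) (hn : i ≠ n) : e n i = emid i := by
  ext1 b; simp [e, h0, hn]

lemma phi_zero (b : AElt) :
    phi n l 0 b = l - sumA n b + 2 * max (b.xb 1 - b.x 1) 0 := if_pos rfl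

lemma phi_self (hn : n ≠ 0) (b : AElt) : phi n l n b = b.x n := by
  simp [phi, hn]

lemma phi_of_ne (h0 : i ≠ 0) (hn : i ≠ n) (b : AElt) :
    phi n l i b = b.x i + max (b.xb (i+1) - b.x (i+1)) 0 := by
  simp [phi, h0, hn]

lemma eps_zero (b : AElt) :
    eps n l 0 b = l - sumA n b + 2 * max (b.x 1 - b.xb 1) 0 := if_pos rfl

lemma eps_self (hn : n ≠ 0) (b : AElt) : eps n l n b = b.xb n := by
  simp [eps, hn]

lemma eps_of_ne (h0 : i ≠ 0) (hn : i ≠ n) (b : AElt) :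
    eps n l i b = b.xb i + max (b.x (i+1) - b.xb (i+1)) 0 := by
  simp [eps, h0, hn]

lemma f_e (b : AElt) : f n i (e n i b) = b := by
  unfold f e f0 e0 flast elast fmid emid
  split_ifs <;> simp only [update_self, update_apply] at * <;>
    first
    | omega
    | (ext j <;> simp only [update_apply] <;> split_ifs <;> subst_vars <;> omega)

lemma phi_nonneg {b : AElt} (hb : mem n l b) : 0 ≤ phi n l i b := by
  obtain ⟨hx, -, -, hsum⟩ := hb
  have := hx i; have := hx n
  unfold phi; split_ifs <;> omega

lemma phi_e (hn : 1 ≤ n) (b : AElt) : phi n l i (e n i b) = phi n l i b + 1 := by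
  have h1 : 1 ∈ Icc 1 n := mem_Icc.2 ⟨le_rfl, hn⟩
  obtain rfl | h0 := eq_or_ne i 0
  · rw [e_zero, e0, phi_zero, phi_zero]
    split_ifs with h
    · rw [sumA_mk_update_x h1, mk_x_xb]; simp only [update_self]; omega
    · rw [sumA_mk_update_xb h1, mk_x_xb]; simp only [update_self]; omega
  obtain rfl | hin := eq_or_ne i n
  · rw [e_self h0, elast, phi_self h0, phi_self h0]; exact update_self ..
  · rw [e_of_ne h0 hin, emid, phi_of_ne h0 hin, phi_of_ne h0 hin]
    split_ifs <;> simp only [update_self, update_apply] <;> (try split_ifs) <;> omega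

-- Each two-coordinate move is performed as its decreasing update followed by its increasing
-- one, so that the intermediate element stays within the level bound.
lemma mem_f (hn : 1 ≤ n) (hi : i ≤ n) {b : AElt} (hb : mem n l b) (hφ : 0 < phi n l i b) :
    mem n l (f n i b) := by
  obtain ⟨hx, hxb, -, hsum⟩ := id hb
  have h1 : 1 ∈ Icc 1 n := mem_Icc.2 ⟨le_rfl, hn⟩
  obtain rfl | h0 := eq_or_ne i 0
  · rw [phi_zero] at hφ
    have := hx 1; have := hxb 1
    rw [f_zero, f0]; split_ifs
    · exact mem_mk_update_x hb h1 (by omega) (by omega)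
    · exact mem_mk_update_xb hb h1 (by omega) (by omega)
  obtain rfl | hin := eq_or_ne i n
  · rw [phi_self h0] at hφ
    have hiI : i ∈ Icc 1 i := mem_Icc.2 ⟨by omega, le_rfl⟩
    have := hxb i
    have h' := mem_mk_update_x hb hiI (v := b.x i - 1) (by omega) (by omega)
    rw [f_self h0, flast]
    refine mem_mk_update_xb h' hiI (by omega) ?_
    rw [sumA_mk_update_x hiI, mk_x_xb]; dsimp only; omega
  have hiI : i ∈ Icc 1 n := mem_Icc.2 ⟨by omega, hi⟩
  have hi1I : i + 1 ∈ Icc 1 n := mem_Icc.2 ⟨by omega, by omega⟩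
  rw [phi_of_ne h0 hin] at hφ
  have := hx i; have := hx (i+1); have := hxb i; have := hxb (i+1)
  rw [f_of_ne h0 hin, fmid]; split_ifs
  · have h' := mem_mk_update_x hb hiI (v := b.x i - 1) (by omega) (by omega)
    refine mem_mk_update_x h' hi1I (by omega) ?_
    rw [sumA_mk_update_x hiI, mk_x_xb]; dsimp only; rw [update_of_ne (by omega)]; omega
  · have h' := mem_mk_update_xb hb hi1I (v := b.xb (i+1) - 1) (by omega) (by omega)
    refine mem_mk_update_xb h' hiI (by omega) ?_
    rw [sumA_mk_update_xb hi1I, mk_x_xb]; dsimp only; rw [update_of_ne (by omega)]; omega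

lemma mem_e (hn : 1 ≤ n) (hi : i ≤ n) {b : AElt} (hb : mem n l b) (hε : 0 < eps n l i b) :
    mem n l (e n i b) := by
  obtain ⟨hx, hxb, -, hsum⟩ := id hb
  have h1 : 1 ∈ Icc 1 n := mem_Icc.2 ⟨le_rfl, hn⟩
  obtain rfl | h0 := eq_or_ne i 0
  · rw [eps_zero] at hε
    have := hx 1; have := hxb 1
    rw [e_zero, e0]; split_ifs
    · exact mem_mk_update_x hb h1 (by omega) (by omega)
    · exact mem_mk_update_xb hb h1 (by omega) (by omega)
  obtain rfl | hin := eq_or_ne i n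
  · rw [eps_self h0] at hε
    have hiI : i ∈ Icc 1 i := mem_Icc.2 ⟨by omega, le_rfl⟩
    have := hx i
    have h' := mem_mk_update_xb hb hiI (v := b.xb i - 1) (by omega) (by omega)
    rw [e_self h0, elast]
    refine mem_mk_update_x h' hiI (by omega) ?_
    rw [sumA_mk_update_xb hiI, mk_x_xb]; dsimp only; omega
  have hiI : i ∈ Icc 1 n := mem_Icc.2 ⟨by omega, hi⟩
  have hi1I : i + 1 ∈ Icc 1 n := mem_Icc.2 ⟨by omega, by omega⟩
  rw [eps_of_ne h0 hin] at hε
  have := hx i; have := hx (i+1); have := hxb i; have := hxb (i+1)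
  rw [e_of_ne h0 hin, emid]; split_ifs
  · have h' := mem_mk_update_x hb hi1I (v := b.x (i+1) - 1) (by omega) (by omega)
    refine mem_mk_update_x h' hiI (by omega) ?_
    rw [sumA_mk_update_x hi1I, mk_x_xb]; dsimp only; rw [update_of_ne (by omega)]; omega
  · have h' := mem_mk_update_xb hb hiI (v := b.xb i - 1) (by omega) (by omega)
    refine mem_mk_update_xb h' hi1I (by omega) ?_
    rw [sumA_mk_update_xb hiI, mk_x_xb]; dsimp only; rw [update_of_ne (by omega)]; omega

def unbarredSet (n l a : ℕ) : Set AElt :=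
  {b | mem n l b ∧ (∀ i, a < i → b.x i = 0) ∧ ∀ i, b.xb i = 0}

def barredSet (n l a : ℕ) : Set AElt :=
  {b | mem n l b ∧ ∀ i, i ≤ n - a → b.xb i = 0}

lemma stringClosure_f_eq (hn : 1 ≤ n) {S T : Set AElt} (hT : ∀ c ∈ T, mem n l c)
    (hST : S ⊆ T) (hf : ∀ c ∈ T, 0 < phi n l i c → f n i c ∈ T) (μ : AElt → ℕ)
    (he : ∀ c ∈ T, c ∈ S ∨ e n i c ∈ T ∧ μ (e n i c) < μ c) :
    stringClosure (f n i) (0 < phi n l i ·) S = T := by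
  refine (stringClosure_subset hST hf).antisymm (subset_stringClosure μ fun c hc => ?_)
  refine (he c hc).imp_right fun ⟨hec, hμ⟩ => ⟨e n i c, hec, ?_, f_e c, hμ⟩
  rw [phi_e hn]
  linarith [phi_nonneg (i := i) (hT c hc)]

lemma bzero_mem_unbarredSet : bzero ∈ unbarredSet n l 1 :=
  ⟨⟨fun _ => le_rfl, fun _ => le_rfl, fun _ _ => ⟨rfl, rfl⟩, by simp [sumA, bzero]⟩,
    fun _ _ => rfl, fun _ => rfl⟩

lemma stringClosure_f_zero (hn : 1 ≤ n) :
    stringClosure (f n 0) (0 < phi n l 0 ·) {bzero} = unbarredSet n l 1 := by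
  refine stringClosure_f_eq hn (fun c hc => hc.1)
    (Set.singleton_subset_iff.2 bzero_mem_unbarredSet) ?_ (fun c => (c.x 1).toNat) ?_
  · rintro c ⟨hc, hx, hxb⟩ hφ
    have h : c.xb 1 ≤ c.x 1 := by rw [hxb]; exact hc.1 1
    refine ⟨mem_f hn (Nat.zero_le n) hc hφ, ?_, ?_⟩ <;> simp only [f_zero, f0, if_pos h]
    · intro j hj; rw [update_of_ne (by omega)]; exact hx j hj
    · exact hxb
  · rintro c ⟨hc, hx, hxb⟩
    obtain h | h := (hc.1 1).eq_or_lt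
    · left
      ext j
      · obtain rfl | rfl | hj : j = 0 ∨ j = 1 ∨ 1 < j := by omega
        exacts [(hc.2.2.1 0 (Or.inl rfl)).1, h.symm, hx j hj]
      · exact hxb j
    · right
      have hε : 0 < eps n l 0 c := by
        rw [eps_zero, hxb]; have := hc.2.2.2; omega
      have he : e n 0 c = ⟨update c.x 1 (c.x 1 - 1), c.xb⟩ := by
        rw [e_zero, e0, if_pos (by rw [hxb]; exact h)]
      refine ⟨⟨mem_e hn (Nat.zero_le n) hc hε, ?_, ?_⟩, ?_⟩ <;> rw [he] <;> dsimp only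
      · intro j hj; rw [update_of_ne (by omega)]; exact hx j hj
      · exact hxb
      · rw [update_self]; omega

lemma stringClosure_f_unbarredSet {a : ℕ} (ha : 1 ≤ a) (han : a < n) :
    stringClosure (f n a) (0 < phi n l a ·) (unbarredSet n l a) = unbarredSet n l (a + 1) := by
  have hf : f n a = fmid a := f_of_ne (by omega) (by omega)
  refine stringClosure_f_eq (by omega) (fun c hc => hc.1)
    (fun c ⟨hc, hx, hxb⟩ => ⟨hc, fun j hj => hx j (by omega), hxb⟩) ?_
    (fun c => (c.x (a + 1)).toNat) ?_
  · rintro c ⟨hc, hx, hxb⟩ hφ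
    have h : c.xb (a + 1) ≤ c.x (a + 1) := by rw [hxb]; exact hc.1 _
    refine ⟨mem_f (by omega) han.le hc hφ, ?_, ?_⟩ <;> rw [hf, fmid, if_pos h] <;> dsimp only
    · intro j hj; rw [update_of_ne (by omega), update_of_ne (by omega)]; exact hx j hj
    · exact hxb
  · rintro c ⟨hc, hx, hxb⟩
    obtain h | h := (hc.1 (a + 1)).eq_or_lt
    · left
      refine ⟨hc, fun j hj => ?_, hxb⟩
      obtain rfl | hj : j = a + 1 ∨ a + 1 < j := by omega
      exacts [h.symm, hx j hj]
    · right
      have hε : 0 < eps n l a c := by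
        rw [eps_of_ne (by omega) (by omega), hxb, hxb]; omega
      have he : e n a c = ⟨update (update c.x (a+1) (c.x (a+1) - 1)) a (c.x a + 1), c.xb⟩ := by
        rw [e_of_ne (by omega) (by omega), emid, if_pos (by rw [hxb]; exact h)]
      refine ⟨⟨mem_e (by omega) han.le hc hε, ?_, ?_⟩, ?_⟩ <;> rw [he] <;> dsimp only
      · intro j hj; rw [update_of_ne (by omega), update_of_ne (by omega)]; exact hx j hj
      · exact hxb
      · rw [update_of_ne (by omega), update_self]; omega

lemma stringClosure_f_self (hn : 1 ≤ n) :
    stringClosure (f n n) (0 < phi n l n ·) (unbarredSet n l n) = barredSet n l 1 := by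
  refine stringClosure_f_eq hn (fun c hc => hc.1)
    (fun c ⟨hc, _, hxb⟩ => ⟨hc, fun j _ => hxb j⟩) ?_ (fun c => (c.xb n).toNat) ?_
  · rintro c ⟨hc, hxb⟩ hφ
    refine ⟨mem_f hn le_rfl hc hφ, fun j hj => ?_⟩
    rw [f_self (by omega), flast]; dsimp only
    rw [update_of_ne (by omega)]; exact hxb j hj
  · rintro c ⟨hc, hxb⟩
    obtain h | h := (hc.2.1 n).eq_or_lt
    · left
      refine ⟨hc, fun j hj => (hc.2.2.1 j (Or.inr hj)).1, fun j => ?_⟩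
      obtain hj | rfl | hj := lt_trichotomy j n
      exacts [hxb j (by omega), h.symm, (hc.2.2.1 j (Or.inr hj)).2]
    · right
      have hε : 0 < eps n l n c := by rw [eps_self (by omega)]; exact h
      refine ⟨⟨mem_e hn le_rfl hc hε, fun j hj => ?_⟩, ?_⟩ <;>
        rw [e_self (by omega), elast] <;> dsimp only
      · rw [update_of_ne (by omega)]; exact hxb j hj
      · rw [update_self]; omega

lemma stringClosure_f_barredSet {a : ℕ} (ha : 1 ≤ a) (han : a < n) :
    stringClosure (f n (n - a)) (0 < phi n l (n - a) ·) (barredSet n l a) =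
      barredSet n l (a + 1) := by
  have hf : f n (n - a) = fmid (n - a) := f_of_ne (by omega) (by omega)
  refine stringClosure_f_eq (by omega) (fun c hc => hc.1)
    (fun c ⟨hc, hxb⟩ => ⟨hc, fun j hj => hxb j (by omega)⟩) ?_
    -- `e_{n-a}` lowers either `x̄_{n-a}` or `x_{n-a+1}` by one
    (fun c => (c.xb (n - a) + c.x (n - a + 1)).toNat) ?_
  · rintro c ⟨hc, hxb⟩ hφ
    refine ⟨mem_f (by omega) (by omega) hc hφ, fun j hj => ?_⟩
    rw [hf, fmid]; split_ifs <;> dsimp only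
    · exact hxb j hj
    · rw [update_of_ne (by omega), update_of_ne (by omega)]; exact hxb j hj
  · rintro c ⟨hc, hxb⟩
    obtain h | h := (hc.2.1 (n - a)).eq_or_lt
    · left
      refine ⟨hc, fun j hj => ?_⟩
      obtain rfl | hj : j = n - a ∨ j ≤ n - (a + 1) := by omega
      exacts [h.symm, hxb j hj]
    · right
      have hε : 0 < eps n l (n - a) c := by
        rw [eps_of_ne (by omega) (by omega)]; omega
      have := hc.1 (n - a); have := hc.1 (n - a + 1); have := hc.2.1 (n - a + 1)
      refine ⟨⟨mem_e (by omega) (by omega) hc hε, fun j hj => ?_⟩, ?_⟩ <;>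
        rw [e_of_ne (by omega) (by omega), emid] <;> split_ifs <;> dsimp only
      · exact hxb j hj
      · rw [update_of_ne (by omega), update_of_ne (by omega)]; exact hxb j hj
      · rw [update_of_ne (by omega), update_self]; omega
      · rw [update_of_ne (by omega), update_self]; omega

lemma BSet_succ (a : ℕ) : BSet n l (a + 1) =
    stringClosure (f n (idx n (a + 1))) (0 < phi n l (idx n (a + 1)) ·) (BSet n l a) := rfl

lemma idx_of_le {a : ℕ} (h : a ≤ n + 1) : idx n a = a - 1 := if_pos h

lemma idx_add_succ {a : ℕ} (h : 1 ≤ a) : idx n (n + a + 1) = n - a := by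
  rw [idx, if_neg (by omega)]; omega

lemma BSet_eq_unbarredSet (hn : 1 ≤ n) {a : ℕ} (ha : 1 ≤ a) (han : a ≤ n) :
    BSet n l a = unbarredSet n l a := by
  induction a, ha using Nat.le_induction with
  | base => rw [BSet_succ, idx_of_le (by omega), BSet, stringClosure_f_zero hn]
  | succ a ha ih =>
    rw [BSet_succ, idx_of_le (by omega), Nat.add_sub_cancel, ih (by omega),
      stringClosure_f_unbarredSet ha (by omega)]

lemma BSet_eq_barredSet (hn : 1 ≤ n) {a : ℕ} (ha : 1 ≤ a) (han : a ≤ n) :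
    BSet n l (n + a) = barredSet n l a := by
  induction a, ha using Nat.le_induction with
  | base =>
    rw [BSet_succ, idx_of_le le_rfl, Nat.add_sub_cancel, BSet_eq_unbarredSet hn hn le_rfl,
      stringClosure_f_self hn]
  | succ a ha ih =>
    rw [← add_assoc, BSet_succ, idx_add_succ ha, ih (by omega),
      stringClosure_f_barredSet ha (by omega)]

lemma barredSet_self : barredSet n l n = {b | mem n l b} := by
  ext b
  refine ⟨fun hb => hb.1, fun hb => ⟨hb, fun j hj => ?_⟩⟩
  obtain rfl : j = 0 := by omega
  exact (hb.2.2.1 0 (Or.inl rfl)).2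

end AElt

theorem A2n2_Demazure_subsets_general (n l : ℕ) (hn : 2 ≤ n) :
    (∀ a, 1 ≤ a → a ≤ n →
      AElt.BSet n l a =
        {b | AElt.mem n l b ∧ (∀ i, a < i → b.x i = 0) ∧ ∀ i, b.xb i = 0}) ∧
    (∀ a, 1 ≤ a → a ≤ n - 1 →
      AElt.BSet n l (n + a) =
        {b | AElt.mem n l b ∧ ∀ i, i ≤ n - a → b.xb i = 0}) ∧
    AElt.BSet n l (2 * n) = {b | AElt.mem n l b} := by
  refine ⟨fun a ha han => AElt.BSet_eq_unbarredSet (by omega) ha han,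
    fun a ha han => AElt.BSet_eq_barredSet (by omega) ha (by omega), ?_⟩
  rw [two_mul, AElt.BSet_eq_barredSet (by omega) (by omega) le_rfl, AElt.barredSet_self]

/-- in the `A_{2n}^{(2)}` perfect crystal of level `l`, the
recursively defined sets satisfy `B_a = {(x_1,…,x_a,0,…,0)}` for `1 ≤ a ≤ n`,
`B_{n+a} = {(x_1,…,x_n,x̄_n,…,x̄_{n-a+1},0,…,0)}` for `1 ≤ a ≤ n-1`, and
`B_{2n} = B`. -/
theorem A2n2_Demazure_subsets (n l : ℕ) (hn : 2 ≤ n) (hl : 1 ≤ l) :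
    (∀ a, 1 ≤ a → a ≤ n →
      AElt.BSet n l a =
        {b | AElt.mem n l b ∧ (∀ i, a < i → b.x i = 0) ∧ ∀ i, b.xb i = 0}) ∧
    (∀ a, 1 ≤ a → a ≤ n - 1 →
      AElt.BSet n l (n + a) =
        {b | AElt.mem n l b ∧ ∀ i, i ≤ n - a → b.xb i = 0}) ∧
    AElt.BSet n l (2 * n) = {b | AElt.mem n l b} :=
  A2n2_Demazure_subsets_general n l hn
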